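/- arXiv:math/0703913 — 4 statements merged into one kernel-verified Lean document; each statement's English description precedes it below -/
import Mathlib

section
/- In the Artin group A_k, for g ∈ T = {prod(a,b;i), prod(b,a;i) : 1 ≤ i ≤ k−1}, define g* = Δg⁻¹. Then g* ∈ T and the word-length with respect to S = {a, b, a⁻¹, b⁻¹} satisfies |g*|_S = k − |g|_S. -/
/-- The alternating word `xyxy⋯` with `n` letters in the free group on `Bool`. -/
def altWord : Bool → ℕ → FreeGroup Bool
  | _, 0 => 1
  | x, n + 1 => FreeGroup.of x * altWord (!x) n

/-- The Artin relation `prod(a,b;k) = prod(b,a;k)`. -/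
def artinRel (k : ℕ) : Set (FreeGroup Bool) := {altWord false k * (altWord true k)⁻¹}

/-- The Artin group of dihedral type `A_k = ⟨a, b ∣ prod(a,b;k) = prod(b,a;k)⟩`. -/
def Ak (k : ℕ) : Type := PresentedGroup (artinRel k)

instance (k : ℕ) : Group (Ak k) := inferInstanceAs (Group (PresentedGroup (artinRel k)))

/-- The generator `a` of `A_k`. -/
def aA (k : ℕ) : Ak k := PresentedGroup.of false

/-- The generator `b` of `A_k`. -/
def bA (k : ℕ) : Ak k := PresentedGroup.of true

/-- `altProd x y n = prod(x,y;n) = xyxy⋯` with `n` factors. -/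
def altProd {G : Type*} [Monoid G] : G → G → ℕ → G
  | _, _, 0 => 1
  | x, y, n + 1 => x * altProd y x n

/-- The Garside element `Δ = prod(a,b;k)` of `A_k`. -/
def ΔA (k : ℕ) : Ak k := altProd (aA k) (bA k) k
/-- The set `S = {a, b, a⁻¹, b⁻¹}` of Artin generators of `A_k`. -/
def Sset (k : ℕ) : Set (Ak k) := {aA k, bA k, (aA k)⁻¹, (bA k)⁻¹}

/-- Word length on `A_k` with respect to `S = {a, b, a⁻¹, b⁻¹}`. -/
noncomputable def lenS (k : ℕ) (g : Ak k) : ℕ :=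
  sInf {n | ∃ L : List (Ak k), (∀ x ∈ L, x ∈ Sset k) ∧ L.length = n ∧ L.prod = g}

/-- The set `T = {prod(a,b;i), prod(b,a;i) : 1 ≤ i ≤ k-1}`. -/
def TsetA (k : ℕ) : Set (Ak k) :=
  {g | ∃ i, 1 ≤ i ∧ i ≤ k - 1 ∧
    (g = altProd (aA k) (bA k) i ∨ g = altProd (bA k) (aA k) i)}

-- auxiliary
lemma map_altProd {G H : Type*} [Monoid G] [Monoid H] (φ : G →* H) (x y : G) (n : ℕ) :
    φ (altProd x y n) = altProd (φ x) (φ y) n := by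
  induction n generalizing x y with
  | zero => simp [altProd]
  | succ n ih => simp [altProd, ih]

lemma altProd_add {G : Type*} [Monoid G] (x y : G) (m n : ℕ) :
    altProd x y (m + n) =
      altProd x y m * altProd (if Even m then x else y) (if Even m then y else x) n := by
  induction m generalizing x y with
  | zero => simp [altProd]
  | succ m ih =>
    have : m + 1 + n = (m + n) + 1 := by ring
    rw [this]
    show x * altProd y x (m + n) = _
    rw [ih y x]
    simp only [altProd, Nat.even_add_one]
    by_cases h : Even m <;> simp [h, mul_assoc]

def φf (k : ℕ) : Ak k →* Multiplicative ℤ := by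
  refine PresentedGroup.toGroup (f := fun _ => Multiplicative.ofAdd 1) ?_
  have key : ∀ (x : Bool) (n : ℕ),
      FreeGroup.lift (fun (_ : Bool) => Multiplicative.ofAdd (1 : ℤ)) (altWord x n)
        = Multiplicative.ofAdd (n : ℤ) := by
    intro x n
    induction n generalizing x with
    | zero => simp [altWord]
    | succ n ih =>
      simp [altWord, ih, ← ofAdd_add]
      ring_nf
  rintro r hr
  rcases hr with rfl
  simp [key]

lemma φf_of (k : ℕ) (x : Bool) : φf k (PresentedGroup.of x) = Multiplicative.ofAdd 1 :=
  PresentedGroup.toGroup.of _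

lemma φf_altProd (k : ℕ) (x y : Bool) (n : ℕ) :
    φf k (altProd (PresentedGroup.of x) (PresentedGroup.of y) n) = Multiplicative.ofAdd (n : ℤ) := by
  refine (map_altProd (φf k) (PresentedGroup.of x) (PresentedGroup.of y) n).trans ?_
  rw [φf_of, φf_of]
  induction n with
  | zero => simp [altProd]
  | succ n ih =>
    rw [altProd, ih, ← ofAdd_add]
    congr 1
    push_cast
    ring

def cgen (k : ℕ) : Bool → Ak k := fun x => if x then bA k else aA k

lemma cgen_eq_of (k : ℕ) (x : Bool) : cgen k x = PresentedGroup.of x := by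
  cases x <;> rfl

def altList (k : ℕ) : Bool → ℕ → List (Ak k)
  | _, 0 => []
  | x, n + 1 => cgen k x :: altList k (!x) n

lemma altList_mem (k : ℕ) (x : Bool) (n : ℕ) : ∀ g ∈ altList k x n, g ∈ Sset k := by
  induction n generalizing x with
  | zero => simp [altList]
  | succ n ih =>
    intro g hg
    rcases hg with _ | hg
    · cases x <;> simp [cgen, Sset]
    · exact ih _ _ (by assumption)

lemma altList_length (k : ℕ) (x : Bool) (n : ℕ) : (altList k x n).length = n := by
  induction n generalizing x with
  | zero => rfl
  | succ n ih => simp [altList, ih]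

lemma altList_prod (k : ℕ) (x : Bool) (n : ℕ) :
    (altList k x n).prod = altProd (cgen k x) (cgen k (!x)) n := by
  induction n generalizing x with
  | zero => rfl
  | succ n ih => simp [altList, altProd, ih, Bool.not_not]

lemma lower_bound (k : ℕ) (L : List (Ak k)) (hL : ∀ x ∈ L, x ∈ Sset k) :
    (Multiplicative.toAdd (φf k L.prod)).natAbs ≤ L.length := by
  induction L with
  | nil => simp
  | cons s L ih =>
    have hs : (Multiplicative.toAdd (φf k s)).natAbs = 1 := by
      have hm := hL s (by simp)
      simp only [Sset, Set.mem_insert_iff, Set.mem_singleton_iff] at hm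
      rcases hm with rfl | rfl | rfl | rfl <;> simp [aA, bA, φf_of] <;> erw [map_inv, φf_of] <;> simp
    have := ih (fun x hx => hL x (by simp [hx]))
    calc (Multiplicative.toAdd (φf k (s :: L).prod)).natAbs
        = (Multiplicative.toAdd (φf k s) + Multiplicative.toAdd (φf k L.prod)).natAbs := by
          simp [List.prod_cons]
      _ ≤ (Multiplicative.toAdd (φf k s)).natAbs
            + (Multiplicative.toAdd (φf k L.prod)).natAbs := Int.natAbs_add_le _ _
      _ ≤ 1 + L.length := by rw [hs]; omega
      _ = (s :: L).length := by simp [add_comm]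

lemma lenS_altProd (k : ℕ) (x : Bool) (n : ℕ) :
    lenS k (altProd (PresentedGroup.of x) (PresentedGroup.of (!x)) n) = n := by
  have hmem : n ∈ {m | ∃ L : List (Ak k), (∀ y ∈ L, y ∈ Sset k) ∧ L.length = m ∧
      L.prod = altProd (PresentedGroup.of x) (PresentedGroup.of (!x)) n} :=
    ⟨altList k x n, altList_mem k x n, altList_length k x n,
      by rw [altList_prod, cgen_eq_of, cgen_eq_of]; rfl⟩
  refine le_antisymm (Nat.sInf_le hmem) (le_csInf ⟨n, hmem⟩ ?_)
  rintro m ⟨L, hL, rfl, hprod⟩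
  have := lower_bound k L hL
  rw [hprod, φf_altProd, toAdd_ofAdd] at this
  simpa using this

lemma lenS_ab (k : ℕ) (n : ℕ) : lenS k (altProd (aA k) (bA k) n) = n :=
  lenS_altProd k false n

lemma lenS_ba (k : ℕ) (n : ℕ) : lenS k (altProd (bA k) (aA k) n) = n :=
  lenS_altProd k true n

lemma mk_altWord (k : ℕ) (x : Bool) (n : ℕ) :
    PresentedGroup.mk (artinRel k) (altWord x n)
      = altProd (PresentedGroup.of x) (PresentedGroup.of (!x)) n := by
  induction n generalizing x with
  | zero => simp [altWord, altProd]
  | succ n ih => simp [altWord, altProd, ih, Bool.not_not, PresentedGroup.of]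

lemma delta_ba (k : ℕ) : ΔA k = altProd (bA k) (aA k) k := by
  have h1 : PresentedGroup.mk (artinRel k) (altWord false k * (altWord true k)⁻¹) = 1 := by
    apply (QuotientGroup.eq_one_iff _).mpr
    exact Subgroup.subset_normalClosure rfl
  rw [map_mul, map_inv, mul_inv_eq_one, mk_altWord, mk_altWord] at h1
  exact h1

/-- For `g ∈ T`, the element `g* = Δg⁻¹` again lies in `T` and
`|g*|_S = k − |g|_S`. -/
theorem star_mem_T_and_length (k : ℕ) (hk : 3 ≤ k) (g : Ak k) (hg : g ∈ TsetA k) :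
    ΔA k * g⁻¹ ∈ TsetA k ∧ lenS k (ΔA k * g⁻¹) = k - lenS k g := by
  obtain ⟨i, hi1, hi2, hcase⟩ := hg
  set j := k - i with hj
  have hji : j + i = k := by omega
  have hj1 : 1 ≤ j := by omega
  have hj2 : j ≤ k - 1 := by omega
  rcases hcase with rfl | rfl
  · by_cases hev : Even j
    · have hstar : ΔA k * (altProd (aA k) (bA k) i)⁻¹ = altProd (aA k) (bA k) j := by
        rw [ΔA, ← hji, altProd_add, if_pos hev, if_pos hev]
        group
      rw [hstar, lenS_ab, lenS_ab]
      exact ⟨⟨j, hj1, hj2, Or.inl rfl⟩, rfl⟩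
    · have hstar : ΔA k * (altProd (aA k) (bA k) i)⁻¹ = altProd (bA k) (aA k) j := by
        rw [delta_ba, ← hji, altProd_add, if_neg hev, if_neg hev]
        group
      rw [hstar, lenS_ba, lenS_ab]
      exact ⟨⟨j, hj1, hj2, Or.inr rfl⟩, rfl⟩
  · by_cases hev : Even j
    · have hstar : ΔA k * (altProd (bA k) (aA k) i)⁻¹ = altProd (bA k) (aA k) j := by
        rw [delta_ba, ← hji, altProd_add, if_pos hev, if_pos hev]
        group
      rw [hstar, lenS_ba, lenS_ba]
      exact ⟨⟨j, hj1, hj2, Or.inr rfl⟩, rfl⟩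
    · have hstar : ΔA k * (altProd (bA k) (aA k) i)⁻¹ = altProd (aA k) (bA k) j := by
        rw [ΔA, ← hji, altProd_add, if_neg hev, if_neg hev]
        group
      rw [hstar, lenS_ab, lenS_ba]
      exact ⟨⟨j, hj1, hj2, Or.inl rfl⟩, rfl⟩
end

section
/- Let g ∈ A_k have Garside normal form g = g₁⋯g_m·Δ^δ with g₁,…,g_m ∈ T and δ ≥ 0. Then the word length of g with respect to S = {a,b,a⁻¹,b⁻¹} equals |g|_S = Σᵢ |gᵢ|_S + δ·k. -/
namespace GarsideAux

def fphi : Bool → Multiplicative ℤ := fun _ => Multiplicative.ofAdd 1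

lemma lift_altWord (n : ℕ) (x : Bool) :
    FreeGroup.lift fphi (altWord x n) = Multiplicative.ofAdd (n : ℤ) := by
  induction n generalizing x with
  | zero => simp [altWord]
  | succ n ih =>
      rw [altWord, map_mul, FreeGroup.lift_apply_of, ih]
      show Multiplicative.ofAdd 1 * Multiplicative.ofAdd (n : ℤ) = _
      rw [← ofAdd_add]
      congr 1
      push_cast
      ring

lemma hrel (k : ℕ) : ∀ r ∈ artinRel k, FreeGroup.lift fphi r = 1 := by
  intro r hr
  rcases Set.mem_singleton_iff.mp hr with rfl
  simp [lift_altWord]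

def φ (k : ℕ) : Ak k →* Multiplicative ℤ := PresentedGroup.toGroup (hrel k)

lemma φ_a (k : ℕ) : φ k (aA k) = Multiplicative.ofAdd 1 :=
  PresentedGroup.toGroup.of (hrel k)

lemma φ_b (k : ℕ) : φ k (bA k) = Multiplicative.ofAdd 1 :=
  PresentedGroup.toGroup.of (hrel k)

lemma φ_altProd (k : ℕ) {x y : Ak k} (hx : φ k x = Multiplicative.ofAdd 1)
    (hy : φ k y = Multiplicative.ofAdd 1) (n : ℕ) :
    φ k (altProd x y n) = Multiplicative.ofAdd (n : ℤ) := by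
  induction n generalizing x y with
  | zero => simp [altProd]
  | succ n ih =>
      rw [altProd, map_mul, hx, ih hy hx, ← ofAdd_add]
      congr 1
      push_cast
      ring

def altList {G : Type*} (x y : G) : ℕ → List G
  | 0 => []
  | n + 1 => x :: altList y x n

lemma altList_length {G : Type*} (x y : G) (n : ℕ) : (altList x y n).length = n := by
  induction n generalizing x y with
  | zero => rfl
  | succ n ih => simp [altList, ih]

lemma altList_prod {G : Type*} [Monoid G] (x y : G) (n : ℕ) :
    (altList x y n).prod = altProd x y n := by
  induction n generalizing x y with
  | zero => rfl
  | succ n ih => simp [altList, altProd, ih]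

lemma altList_mem {G : Type*} (x y z : G) (n : ℕ) (h : z ∈ altList x y n) :
    z = x ∨ z = y := by
  induction n generalizing x y with
  | zero => simp [altList] at h
  | succ n ih =>
      rcases List.mem_cons.mp h with h | h
      · exact Or.inl h
      · exact (ih y x h).symm

lemma mem_Sset_of {k : ℕ} {s : Ak k} (h : s = aA k ∨ s = bA k) : s ∈ Sset k := by
  rcases h with rfl | rfl <;> simp [Sset]

lemma φ_Sset {k : ℕ} {s : Ak k} (h : s ∈ Sset k) :
    φ k s = Multiplicative.ofAdd 1 ∨ φ k s = Multiplicative.ofAdd (-1) := by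
  rcases h with rfl | rfl | rfl | rfl
  · exact Or.inl (φ_a k)
  · exact Or.inl (φ_b k)
  · right; rw [map_inv, φ_a]; rfl
  · right; rw [map_inv, φ_b]; rfl

lemma natAbs_le (k : ℕ) (M : List (Ak k)) (hM : ∀ x ∈ M, x ∈ Sset k) :
    (Multiplicative.toAdd (φ k M.prod)).natAbs ≤ M.length := by
  induction M with
  | nil => simp
  | cons s M ih =>
      have hs := φ_Sset (hM s (List.mem_cons_self))
      have hrest := ih (fun x hx => hM x (List.mem_cons_of_mem s hx))
      rw [List.prod_cons, map_mul, toAdd_mul]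
      calc (Multiplicative.toAdd (φ k s) + Multiplicative.toAdd (φ k M.prod)).natAbs
          ≤ (Multiplicative.toAdd (φ k s)).natAbs
            + (Multiplicative.toAdd (φ k M.prod)).natAbs := Int.natAbs_add_le _ _
        _ ≤ 1 + M.length := by
            have : (Multiplicative.toAdd (φ k s)).natAbs = 1 := by
              rcases hs with h | h <;> rw [h] <;> rfl
            omega
        _ = (s :: M).length := by simp [add_comm]

lemma lenS_le (k : ℕ) (g : Ak k) (n : ℕ)
    (h : ∃ M : List (Ak k), (∀ x ∈ M, x ∈ Sset k) ∧ M.length = n ∧ M.prod = g) :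
    lenS k g ≤ n := Nat.sInf_le h

lemma lenS_ge (k : ℕ) (g : Ak k)
    (hne : {n | ∃ M : List (Ak k), (∀ x ∈ M, x ∈ Sset k) ∧ M.length = n ∧ M.prod = g}.Nonempty) :
    (Multiplicative.toAdd (φ k g)).natAbs ≤ lenS k g := by
  obtain ⟨M, hM, hlen, hprod⟩ := Nat.sInf_mem hne
  have h := natAbs_le k M hM
  rw [hprod] at h
  exact h.trans (le_of_eq hlen)

lemma pos_list_φ (k : ℕ) (M : List (Ak k)) (hM : ∀ s ∈ M, s = aA k ∨ s = bA k) :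
    φ k M.prod = Multiplicative.ofAdd (M.length : ℤ) := by
  induction M with
  | nil => simp
  | cons s M ih =>
      rw [List.prod_cons, map_mul, ih (fun x hx => hM x (List.mem_cons_of_mem s hx))]
      have hs : φ k s = Multiplicative.ofAdd 1 := by
        rcases hM s List.mem_cons_self with rfl | rfl
        · exact φ_a k
        · exact φ_b k
      rw [hs, ← ofAdd_add]
      congr 1
      simp
      push_cast
      ring

/-- Every element of `T` has a positive word representative whose length is `lenS`. -/
lemma T_rep (k : ℕ) {x : Ak k} (hx : x ∈ TsetA k) :
    ∃ M : List (Ak k), (∀ s ∈ M, s = aA k ∨ s = bA k) ∧ M.prod = x ∧ M.length = lenS k x := by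
  obtain ⟨i, _, _, hcase⟩ := hx
  have key : ∀ p q : Ak k, (p = aA k ∨ p = bA k) → (q = aA k ∨ q = bA k) →
      x = altProd p q i →
      ∃ M : List (Ak k), (∀ s ∈ M, s = aA k ∨ s = bA k) ∧ M.prod = x ∧ M.length = lenS k x := by
    intro p q hp hq hxe
    refine ⟨altList p q i, ?_, ?_, ?_⟩
    · intro s hs
      rcases altList_mem p q s i hs with rfl | rfl
      · exact hp
      · exact hq
    · rw [altList_prod, hxe]
    · rw [altList_length]
      have hpφ : φ k p = Multiplicative.ofAdd 1 := by
        rcases hp with rfl | rfl; exacts [φ_a k, φ_b k]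
      have hqφ : φ k q = Multiplicative.ofAdd 1 := by
        rcases hq with rfl | rfl; exacts [φ_a k, φ_b k]
      have hφx : φ k x = Multiplicative.ofAdd (i : ℤ) := by
        rw [hxe]; exact φ_altProd k hpφ hqφ i
      have hwit : ∃ M : List (Ak k), (∀ s ∈ M, s ∈ Sset k) ∧ M.length = i ∧ M.prod = x :=
        ⟨altList p q i, fun s hs => mem_Sset_of (by
            rcases altList_mem p q s i hs with rfl | rfl
            exacts [hp, hq]),
          altList_length p q i, by rw [altList_prod, hxe]⟩
      have h1 : lenS k x ≤ i := lenS_le k x i hwit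
      have h2 : (Multiplicative.toAdd (φ k x)).natAbs ≤ lenS k x :=
        lenS_ge k x ⟨i, hwit⟩
      rw [hφx] at h2
      simp at h2
      omega
  rcases hcase with hxe | hxe
  · exact key _ _ (Or.inl rfl) (Or.inr rfl) hxe
  · exact key _ _ (Or.inr rfl) (Or.inl rfl) hxe

lemma L_rep (k : ℕ) (L : List (Ak k)) (hT : ∀ x ∈ L, x ∈ TsetA k) :
    ∃ M : List (Ak k), (∀ s ∈ M, s = aA k ∨ s = bA k) ∧ M.prod = L.prod ∧
      M.length = (L.map (lenS k)).sum := by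
  induction L with
  | nil => exact ⟨[], by simp, by simp, by simp⟩
  | cons x L ih =>
      obtain ⟨M₁, hM₁, hp₁, hl₁⟩ := T_rep k (hT x List.mem_cons_self)
      obtain ⟨M₂, hM₂, hp₂, hl₂⟩ := ih (fun y hy => hT y (List.mem_cons_of_mem x hy))
      refine ⟨M₁ ++ M₂, ?_, ?_, ?_⟩
      · intro s hs
        rcases List.mem_append.mp hs with h | h
        · exact hM₁ s h
        · exact hM₂ s h
      · rw [List.prod_append, hp₁, hp₂, List.prod_cons]
      · rw [List.length_append, hl₁, hl₂]
        simp

lemma Δ_rep (k : ℕ) (n : ℕ) :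
    ∃ M : List (Ak k), (∀ s ∈ M, s = aA k ∨ s = bA k) ∧ M.prod = (ΔA k) ^ n ∧
      M.length = n * k := by
  induction n with
  | zero => exact ⟨[], by simp, by simp, by simp⟩
  | succ n ih =>
      obtain ⟨M, hM, hp, hl⟩ := ih
      refine ⟨M ++ altList (aA k) (bA k) k, ?_, ?_, ?_⟩
      · intro s hs
        rcases List.mem_append.mp hs with h | h
        · exact hM s h
        · exact altList_mem _ _ s k h
      · rw [List.prod_append, hp, altList_prod]
        rw [pow_succ]
        rfl
      · rw [List.length_append, hl, altList_length]
        ring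

end GarsideAux

/-- If `g = g₁⋯g_m·Δ^δ` is the Garside normal form of `g ∈ A_k` (so `m` is minimal)
and `δ ≥ 0`, then `|g|_S = Σᵢ |gᵢ|_S + δ·k`. -/
theorem length_of_garside_nonneg (k : ℕ) (hk : 3 ≤ k) (g : Ak k)
    (L : List (Ak k)) (δ : ℤ)
    (hT : ∀ x ∈ L, x ∈ TsetA k)
    (hg : g = L.prod * ΔA k ^ δ)
    (hmin : ∀ (L' : List (Ak k)) (δ' : ℤ), (∀ x ∈ L', x ∈ TsetA k) →
      g = L'.prod * ΔA k ^ δ' → L.length ≤ L'.length)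
    (hδ : 0 ≤ δ) :
    lenS k g = (L.map (lenS k)).sum + δ.toNat * k := by
  classical
  obtain ⟨M₁, hM₁, hp₁, hl₁⟩ := GarsideAux.L_rep k L hT
  obtain ⟨M₂, hM₂, hp₂, hl₂⟩ := GarsideAux.Δ_rep k δ.toNat
  set N := (L.map (lenS k)).sum + δ.toNat * k with hN
  have hzpow : ΔA k ^ δ = ΔA k ^ δ.toNat := by
    rw [← zpow_natCast, Int.toNat_of_nonneg hδ]
  have hMmem : ∀ s ∈ M₁ ++ M₂, s = aA k ∨ s = bA k := by
    intro s hs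
    rcases List.mem_append.mp hs with h | h
    · exact hM₁ s h
    · exact hM₂ s h
  have hMprod : (M₁ ++ M₂).prod = g := by
    rw [List.prod_append, hp₁, hp₂, hg, hzpow]
  have hMlen : (M₁ ++ M₂).length = N := by
    rw [List.length_append, hl₁, hl₂]
  have hwit : ∃ M : List (Ak k), (∀ x ∈ M, x ∈ Sset k) ∧ M.length = N ∧ M.prod = g :=
    ⟨M₁ ++ M₂, fun s hs => GarsideAux.mem_Sset_of (hMmem s hs), hMlen, hMprod⟩
  have h1 : lenS k g ≤ N := GarsideAux.lenS_le k g N hwit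
  have hφ : GarsideAux.φ k g = Multiplicative.ofAdd (N : ℤ) := by
    rw [← hMprod, GarsideAux.pos_list_φ k _ hMmem, hMlen]
  have h2 : (Multiplicative.toAdd (GarsideAux.φ k g)).natAbs ≤ lenS k g :=
    GarsideAux.lenS_ge k g ⟨N, hwit⟩
  rw [hφ] at h2
  simp at h2
  omega
end

section
/- For each p ∈ (0, 1/4), the cubic polynomial P(X) = 2(4p−1)X³ + (24p² − 18p + 1)X² + p(7 − 12p)X + p(2p − 1) has at least one root in the open interval (0,1). -/
/-- For each `p ∈ (0, 1/4)`, the cubic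
`P(X) = 2(4p−1)X³ + (24p² − 18p + 1)X² + p(7 − 12p)X + p(2p − 1)`
has at least one root in `(0,1)`. -/
theorem cubic_has_root_in_unit_interval (p : ℝ) (hp0 : 0 < p) (hp : p < 1 / 4) :
    ∃ u ∈ Set.Ioo (0 : ℝ) 1,
      2 * (4 * p - 1) * u ^ 3 + (24 * p ^ 2 - 18 * p + 1) * u ^ 2 +
        p * (7 - 12 * p) * u + p * (2 * p - 1) = 0 := by
  set f : ℝ → ℝ := fun u =>
    2 * (4 * p - 1) * u ^ 3 + (24 * p ^ 2 - 18 * p + 1) * u ^ 2 +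
      p * (7 - 12 * p) * u + p * (2 * p - 1) with hf
  have hcont : ContinuousOn f (Set.Icc (0 : ℝ) (1/4)) := by
    apply Continuous.continuousOn; fun_prop
  have h0 : f 0 < 0 := by
    simp only [hf]
    nlinarith
  have h14 : 0 < f (1/4) := by
    have : f (1/4) = (4 * p - 1)^2 / 32 := by simp only [hf]; ring
    rw [this]
    have : 4 * p - 1 ≠ 0 := by nlinarith
    positivity
  have key := intermediate_value_Ioo (by norm_num : (0:ℝ) ≤ 1/4) hcont
  have h0mem : (0:ℝ) ∈ Set.Ioo (f 0) (f (1/4)) := ⟨h0, h14⟩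
  obtain ⟨u, hu, hfu⟩ := key h0mem
  exact ⟨u, ⟨hu.1, lt_trans hu.2 (by norm_num)⟩, hfu⟩
end

section
/- Define the sequence of polynomials F₀(x) = 1, F₁(x) = x, and F_n(x) = 2(2−x)F_{n−1}(x) − F_{n−2}(x) for n ≥ 2. Then for each integer k ≥ 3, the equation F_k(x) = 1 has a unique solution x_k in the open interval (0,1). -/
/-- The polynomials `F₀(x) = 1`, `F₁(x) = x`, `F_n(x) = 2(2−x)F_{n−1}(x) − F_{n−2}(x)`. -/
def F : ℕ → ℝ → ℝ
  | 0 => fun _ => 1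
  | 1 => fun x => x
  | n + 2 => fun x => 2 * (2 - x) * F (n + 1) x - F n x

/-- Chebyshev-like polynomials: `S n u = sinh(n θ)/sinh θ` when `u = cosh θ`. -/
def S : ℕ → ℝ → ℝ
  | 0 => fun _ => 0
  | 1 => fun _ => 1
  | n + 2 => fun u => 2 * u * S (n + 1) u - S n u

lemma S_casor (n : ℕ) (u : ℝ) :
    (S n u)^2 + (S (n+1) u)^2 - 2*u*(S n u)*(S (n+1) u) = 1 := by
  induction n with
  | zero => simp [S]
  | succ n ih =>
    have h : S (n+2) u = 2*u*S (n+1) u - S n u := rfl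
    rw [h]; linear_combination ih

lemma F_S : ∀ (n : ℕ) (u : ℝ),
    u * (F n (3 - 2*u^2) - 1)
      = (u^2 - 1) * (6*u*(S n u)^2 - 4*(S n u)*(S (n+1) u)) := by
  have key : ∀ (n : ℕ) (u : ℝ),
      (u * (F n (3 - 2*u^2) - 1)
        = (u^2 - 1) * (6*u*(S n u)^2 - 4*(S n u)*(S (n+1) u))) ∧
      (u * (F (n+1) (3 - 2*u^2) - 1)
        = (u^2 - 1) * (6*u*(S (n+1) u)^2 - 4*(S (n+1) u)*(S (n+2) u))) := by
    intro n u
    induction n with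
    | zero => constructor <;> simp [F, S] <;> ring
    | succ n ih =>
      obtain ⟨p, p'⟩ := ih
      refine ⟨p', ?_⟩
      have hF : F (n+2) (3 - 2*u^2)
          = 2 * (2 - (3 - 2*u^2)) * F (n+1) (3 - 2*u^2) - F n (3 - 2*u^2) := rfl
      have h2 : S (n+2) u = 2*u*S (n+1) u - S n u := rfl
      have h3 : S (n+3) u = 2*u*S (n+2) u - S (n+1) u := rfl
      rw [h2] at p'
      rw [hF, h3, h2]
      linear_combination (2*(2*u^2-1)) * p' - p - 4*u*(u^2-1) * (S_casor n u)
  exact fun n u => (key n u).1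

lemma S_one : ∀ n : ℕ, S n 1 = n ∧ S (n+1) 1 = n+1 := by
  intro n
  induction n with
  | zero => simp [S]
  | succ n ih =>
    obtain ⟨h1, h2⟩ := ih
    refine ⟨by push_cast; linarith, ?_⟩
    have h : S (n+2) (1:ℝ) = 2*1*S (n+1) 1 - S n 1 := rfl
    rw [h, h1, h2]; push_cast; ring

lemma S_ge {u : ℝ} (hu : 1 ≤ u) : ∀ n : ℕ, (n:ℝ) ≤ S n u ∧ S n u + 1 ≤ S (n+1) u := by
  intro n
  induction n with
  | zero => simp [S]
  | succ n ih =>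
    obtain ⟨h1, h2⟩ := ih
    have h : S (n+2) u = 2*u*S (n+1) u - S n u := rfl
    have hpos : (0:ℝ) ≤ S (n+1) u := by
      have : (0:ℝ) ≤ (n:ℝ) := Nat.cast_nonneg n
      linarith
    constructor
    · push_cast; linarith
    · rw [h]; nlinarith

lemma S_pos {u : ℝ} (hu : 1 ≤ u) {n : ℕ} (hn : 1 ≤ n) : 0 < S n u := by
  have h := (S_ge hu n).1
  have : (1:ℝ) ≤ (n:ℝ) := by exact_mod_cast hn
  linarith

lemma S_cross {u v : ℝ} (hu : 1 ≤ u) (huv : u < v) :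
    ∀ n : ℕ, 1 ≤ n → 0 < S (n+1) v * S n u - S (n+1) u * S n v := by
  intro n hn
  induction n with
  | zero => omega
  | succ n ih =>
    have hv : 1 ≤ v := le_of_lt (lt_of_le_of_lt hu huv)
    rcases Nat.eq_zero_or_pos n with h0 | h0
    · subst h0
      have e1 : S 2 v = 2*v := by simp [S]
      have e2 : S 2 u = 2*u := by simp [S]
      have e3 : S 1 u = 1 := rfl
      have e4 : S 1 v = 1 := rfl
      rw [e1, e2, e3, e4]; linarith
    · have W := ih h0
      have hAu : 0 < S (n+1) u := S_pos hu (by omega)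
      have hBv : 0 < S (n+1) v := S_pos hv (by omega)
      have h2u : S (n+2) u = 2*u*S (n+1) u - S n u := rfl
      have h2v : S (n+2) v = 2*v*S (n+1) v - S n v := rfl
      rw [h2u, h2v]
      nlinarith [mul_pos hAu hBv]

lemma F_zero : ∀ n : ℕ, F (n+2) 0 ≤ -1 ∧ F (n+3) 0 ≤ F (n+2) 0 := by
  intro n
  induction n with
  | zero =>
    have h2 : F 2 (0:ℝ) = 2*(2-0)*F 1 0 - F 0 0 := rfl
    have h3 : F 3 (0:ℝ) = 2*(2-0)*F 2 0 - F 1 0 := rfl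
    have h0 : F 0 (0:ℝ) = 1 := rfl
    have h1 : F 1 (0:ℝ) = 0 := rfl
    rw [h3, h2, h0, h1]; norm_num
  | succ n ih =>
    obtain ⟨h1, h2⟩ := ih
    have h4 : F (n+4) (0:ℝ) = 2*(2-0)*F (n+3) 0 - F (n+2) 0 := rfl
    refine ⟨by linarith, ?_⟩
    rw [h4]; linarith

lemma S_cont : ∀ n : ℕ, Continuous (fun u => S n u) ∧ Continuous (fun u => S (n+1) u) := by
  intro n
  induction n with
  | zero =>
    constructor
    · exact continuous_const
    · exact continuous_const
  | succ n ih =>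
    obtain ⟨h1, h2⟩ := ih
    refine ⟨h2, ?_⟩
    have h : (fun u : ℝ => S (n+2) u) = fun u => 2*u*S (n+1) u - S n u := rfl
    rw [h]
    exact (((continuous_const.mul continuous_id).mul h2).sub h1)


/-- For each `k ≥ 3`, the equation `F_k(x) = 1` has a unique solution in `(0,1)`. -/
theorem F_eq_one_unique_solution (k : ℕ) (hk : 3 ≤ k) :
    ∃! x : ℝ, x ∈ Set.Ioo (0 : ℝ) 1 ∧ F k x = 1 := by
  obtain ⟨j, rfl⟩ : ∃ j, k = j + 3 := ⟨k - 3, by omega⟩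
  set E : ℝ → ℝ := fun u => 6*u*S (j+3) u - 4*S (j+4) u with hEdef
  -- uniqueness of zeros of E on (1, ∞)
  have huniq : ∀ u v : ℝ, 1 < u → 1 < v → E u = 0 → E v = 0 → u = v := by
    have main : ∀ u v : ℝ, 1 < u → u < v → E u = 0 → E v = 0 → False := by
      intro u v hu huv hEu hEv
      have hv : 1 < v := lt_trans hu huv
      have hru : S (j+4) u = 2*u*S (j+3) u - S (j+2) u := rfl
      have hrv : S (j+4) v = 2*v*S (j+3) v - S (j+2) v := rfl
      simp only [hEdef] at hEu hEv
      have hu4 : S (j+4) u = 3 * S (j+2) u := by linarith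
      have hv4 : S (j+4) v = 3 * S (j+2) v := by linarith
      have W1 := S_cross (le_of_lt hu) huv (j+2) (by omega)
      have W2 := S_cross (le_of_lt hu) huv (j+3) (by omega)
      rw [show j+3+1 = j+4 from rfl] at W2
      rw [hu4, hv4] at W2
      rw [show j+2+1 = j+3 from rfl] at W1
      nlinarith [W1, W2]
    intro u v hu hv hEu hEv
    rcases lt_trichotomy u v with h | h | h
    · exact absurd (main u v hu h hEu hEv) not_false
    · exact h
    · exact absurd (main v u hv h hEv hEu) not_false
  -- any solution x gives a zero of E
  have hzero : ∀ x : ℝ, x ∈ Set.Ioo (0:ℝ) 1 → F (j+3) x = 1 →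
      ∃ u : ℝ, 1 < u ∧ x = 3 - 2*u^2 ∧ E u = 0 := by
    intro x hx hFx
    set u := Real.sqrt ((3-x)/2) with hudef
    have hsq : u^2 = (3-x)/2 := Real.sq_sqrt (by linarith [hx.2])
    have hgt : 1 < u := by nlinarith [Real.sqrt_nonneg ((3-x)/2), hx.2]
    have hxeq : x = 3 - 2*u^2 := by rw [hsq]; ring
    refine ⟨u, hgt, hxeq, ?_⟩
    have hid := F_S (j+3) u
    rw [← hxeq, hFx] at hid
    have h' : (u^2 - 1) * (S (j+3) u * (6*u*S (j+3) u - 4*S (j+4) u)) = 0 := by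
      linear_combination -hid
    have hSpos : 0 < S (j+3) u := S_pos (le_of_lt hgt) (by omega)
    rcases mul_eq_zero.mp h' with h1 | h1
    · nlinarith
    · rcases mul_eq_zero.mp h1 with h2 | h2
      · exact absurd h2 (ne_of_gt hSpos)
      · exact h2
  -- existence of a zero of E in (1, √(3/2)) by IVT
  set u₁ := Real.sqrt (3/2) with hu₁def
  have hu₁sq : u₁^2 = 3/2 := Real.sq_sqrt (by norm_num)
  have hu₁gt : 1 < u₁ := by nlinarith [Real.sqrt_nonneg (3/2:ℝ)]
  have hEcont : Continuous E := by
    have h1 := (S_cont (j+3)).1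
    have h2 := (S_cont (j+3)).2
    rw [show j+3+1 = j+4 from rfl] at h2
    exact (((continuous_const.mul continuous_id).mul h1).sub (continuous_const.mul h2))
  have hE1 : 0 < E 1 := by
    have a := (S_one (j+3)).1
    have b := (S_one (j+3)).2
    rw [show j+3+1 = j+4 from rfl] at b
    simp only [hEdef]
    rw [a, b]
    push_cast
    linarith
  have hEu₁ : E u₁ < 0 := by
    have hid := F_S (j+3) u₁
    rw [show j+3+1 = j+4 from rfl] at hid
    have hx0 : (3 : ℝ) - 2*u₁^2 = 0 := by rw [hu₁sq]; ring
    rw [hx0] at hid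
    have hFz : F (j+3) (0:ℝ) ≤ -1 := by
      have := (F_zero (j+1)).1
      rwa [show j+1+2 = j+3 from rfl] at this
    have hSpos : 0 < S (j+3) u₁ := S_pos (le_of_lt hu₁gt) (by omega)
    have hL : u₁ * (F (j+3) (0:ℝ) - 1) < 0 := by nlinarith
    rw [hid] at hL
    rw [hu₁sq] at hL
    norm_num at hL
    simp only [hEdef]
    by_contra hcon
    push_neg at hcon
    have hm := mul_nonneg hSpos.le hcon
    nlinarith [hm, hL]
  have hsub := intermediate_value_Ioo' (le_of_lt hu₁gt) hEcont.continuousOn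
  obtain ⟨u₀, hu₀mem, hEu₀⟩ := hsub ⟨hEu₁, hE1⟩
  obtain ⟨hu₀1, hu₀u₁⟩ := hu₀mem
  set x₀ := 3 - 2*u₀^2 with hx₀def
  have hx₀mem : x₀ ∈ Set.Ioo (0:ℝ) 1 := by
    constructor
    · simp only [hx₀def]; nlinarith
    · simp only [hx₀def]; nlinarith
  have hFx₀ : F (j+3) x₀ = 1 := by
    have hid := F_S (j+3) u₀
    simp only [hEdef] at hEu₀
    have h0 : u₀ * (F (j+3) x₀ - 1) = 0 := by
      rw [hx₀def, hid]
      linear_combination (u₀^2 - 1) * (S (j+3) u₀) * hEu₀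
    rcases mul_eq_zero.mp h0 with h | h
    · exact absurd (h ▸ hu₀1) (by norm_num)
    · linarith
  refine ⟨x₀, ⟨hx₀mem, hFx₀⟩, ?_⟩
  rintro x ⟨hx, hFx⟩
  obtain ⟨u, hu1, hxu, hEu⟩ := hzero x hx hFx
  have : u = u₀ := huniq u u₀ hu1 hu₀1 hEu hEu₀
  rw [hxu, this]
end
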